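/- arXiv:2301.05361 — 2 statements merged into one kernel-verified Lean document; each statement's English description precedes it below -/
import Mathlib

section
/- Let v : ℝ²₊ → ℝ² be a bounded harmonic map on the upper half-plane, let h ∈ S¹ be a constant unit vector, and suppose ⟨v, h^⊥⟩ = 0 and ∂_n⟨v, h⟩ = 0 on the boundary ∂ℝ²₊. Then v is constant. -/
/-!
Reflect across the boundary. For the unit vector `h`, the component `⟪v, h⟫` satisfies a Neumann
condition on `ℝ` and is extended evenly, while `⟪v, h^⊥⟫` satisfies a Dirichlet condition and is
extended oddly. A `C²` function that is harmonic on both half-planes and agrees with its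
reflection to first order along `ℝ` agrees with it to second order, because the Laplacian
determines `∂²ᵧ`; so the glued functions are bounded harmonic functions on `ℂ`, hence constant by
Liouville's theorem.
-/

open MeasureTheory Set
open scoped RealInnerProductSpace

noncomputable section

abbrev E2 := EuclideanSpace ℝ (Fin 2)

/-- Laplacian of a map on ℝ², via second derivatives along the standard basis. -/
def vlap {F : Type*} [NormedAddCommGroup F] [NormedSpace ℝ F] (f : E2 → F) (x : E2) : F :=
  ∑ i : Fin 2, fderiv ℝ (fun y => fderiv ℝ f y (EuclideanSpace.single i 1)) x
    (EuclideanSpace.single i 1)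

/-- Rotation of a vector in ℝ² by π/2. -/
def perp (v : E2) : E2 := (WithLp.equiv 2 (Fin 2 → ℝ)).symm ![-(v 1), v 0]

open Filter Topology InnerProductSpace Laplacian Complex ComplexConjugate

section Gluing

theorem Set.EqOn.piecewise_eqOn_closure {α β : Type*} [TopologicalSpace α] {s : Set α}
    [∀ x, Decidable (x ∈ s)] {f g : α → β} (h : EqOn f g (frontier s)) :
    EqOn (s.piecewise g f) g (closure s) := by
  intro y hy
  by_cases hys : y ∈ s
  · exact s.piecewise_eq_of_mem _ _ hys
  · rw [s.piecewise_eq_of_notMem _ _ hys]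
    exact h ⟨hy, fun hi => hys (interior_subset hi)⟩

variable {E F : Type*} [NormedAddCommGroup E] [NormedSpace ℝ E] [NormedAddCommGroup F]
  [NormedSpace ℝ F] {s : Set E} [∀ x, Decidable (x ∈ s)] {f g : E → F}

theorem hasFDerivWithinAt_piecewise_closure {f' g' : E → E →L[ℝ] F}
    (hg : ∀ x, HasFDerivAt g (g' x) x) (h : EqOn f g (frontier s)) (h' : EqOn f' g' (frontier s))
    (x : E) : HasFDerivWithinAt (s.piecewise g f) (s.piecewise g' f' x) (closure s) x := by
  by_cases hx : x ∈ closure s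
  · rw [h'.piecewise_eqOn_closure hx]
    exact (hg x).hasFDerivWithinAt.congr h.piecewise_eqOn_closure (h.piecewise_eqOn_closure hx)
  · exact .of_notMem_closure (by rwa [closure_closure])

theorem hasFDerivAt_piecewise {f' g' : E → E →L[ℝ] F} (hf : ∀ x, HasFDerivAt f (f' x) x)
    (hg : ∀ x, HasFDerivAt g (g' x) x) (h : EqOn f g (frontier s)) (h' : EqOn f' g' (frontier s))
    (x : E) : HasFDerivAt (s.piecewise g f) (s.piecewise g' f' x) x := by
  have hin := hasFDerivWithinAt_piecewise_closure hg h h' x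
  have hout := hasFDerivWithinAt_piecewise_closure (s := sᶜ) hf
    (by rwa [frontier_compl, eqOn_comm]) (by rwa [frontier_compl, eqOn_comm]) x
  rw [piecewise_compl, piecewise_compl] at hout
  have hcover : closure s ∪ closure sᶜ = univ := by
    rw [← closure_union, union_compl_self, closure_univ]
  simpa only [hcover, hasFDerivWithinAt_univ] using hin.union hout

theorem contDiff_two_piecewise (hf : ContDiff ℝ 2 f) (hg : ContDiff ℝ 2 g)
    (h₀ : EqOn f g (frontier s)) (h₁ : EqOn (fderiv ℝ f) (fderiv ℝ g) (frontier s))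
    (h₂ : EqOn (fderiv ℝ (fderiv ℝ f)) (fderiv ℝ (fderiv ℝ g)) (frontier s)) :
    ContDiff ℝ 2 (s.piecewise g f) := by
  have hf' : ContDiff ℝ 1 (fderiv ℝ f) := hf.fderiv_right (by norm_num)
  have hg' : ContDiff ℝ 1 (fderiv ℝ g) := hg.fderiv_right (by norm_num)
  refine contDiff_succ_iff_hasFDerivAt.2 ⟨_, ?_, hasFDerivAt_piecewise
    (fun x => (hf.differentiable two_ne_zero x).hasFDerivAt)
    (fun x => (hg.differentiable two_ne_zero x).hasFDerivAt) h₀ h₁⟩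
  refine contDiff_one_iff_hasFDerivAt.2 ⟨_, ?_, hasFDerivAt_piecewise
    (fun x => (hf'.differentiable one_ne_zero x).hasFDerivAt)
    (fun x => (hg'.differentiable one_ne_zero x).hasFDerivAt) h₁ h₂⟩
  exact (hg'.continuous_fderiv one_ne_zero).piecewise (fun x hx => (h₂ hx).symm)
    (hf'.continuous_fderiv one_ne_zero)

end Gluing

section Laplacian

variable {E E' F : Type*} [NormedAddCommGroup E] [InnerProductSpace ℝ E] [FiniteDimensional ℝ E]
  [NormedAddCommGroup E'] [InnerProductSpace ℝ E'] [FiniteDimensional ℝ E']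
  [NormedAddCommGroup F] [NormedSpace ℝ F]

theorem laplacian_comp_linearIsometryEquiv (L : E ≃ₗᵢ[ℝ] E') {f : E' → F} (hf : ContDiff ℝ 2 f)
    (x : E) : Δ (f ∘ L) x = Δ f (L x) := by
  let b := stdOrthonormalBasis ℝ E
  rw [laplacian_eq_iteratedFDeriv_orthonormalBasis _ b,
    laplacian_eq_iteratedFDeriv_orthonormalBasis _ (b.map L)]
  have h := (L.toContinuousLinearEquiv : E →L[ℝ] E').iteratedFDeriv_comp_right hf x le_rfl
  simp only [ContinuousLinearEquiv.coe_coe, LinearIsometryEquiv.coe_toContinuousLinearEquiv] at h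
  simp only [h, ContinuousMultilinearMap.compContinuousLinearMap_apply, OrthonormalBasis.map_apply]
  refine Finset.sum_congr rfl fun i _ => congrArg _ (funext fun j => ?_)
  fin_cases j <;> simp

theorem ContDiff.continuous_laplacian {f : E → F} (hf : ContDiff ℝ 2 f) : Continuous (Δ f) := by
  rw [laplacian_eq_iteratedFDeriv_stdOrthonormalBasis]
  have := hf.continuous_iteratedFDeriv (m := 2) le_rfl
  fun_prop

theorem ContDiff.laplacian_eq_zero_of_mem_closure {f : E → F} (hf : ContDiff ℝ 2 f) {s : Set E}
    (h : ∀ x ∈ s, Δ f x = 0) {x : E} (hx : x ∈ closure s) : Δ f x = 0 :=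
  EqOn.closure (g := 0) h hf.continuous_laplacian continuous_const hx

theorem vlap_eq_laplacian {f : E2 → F} (hf : ContDiff ℝ 2 f) : vlap f = Δ f := by
  ext x
  have hf' : Differentiable ℝ (fderiv ℝ f) :=
    (hf.fderiv_right (m := 1) (by norm_num)).differentiable one_ne_zero
  rw [laplacian_eq_iteratedFDeriv_orthonormalBasis f (EuclideanSpace.basisFun (Fin 2) ℝ)]
  simp [vlap, iteratedFDeriv_two_apply, fderiv_clm_apply (hf' x) (differentiableAt_const _)]

end Laplacian

section HalfPlane

variable {F : Type*} [NormedAddCommGroup F] [NormedSpace ℝ F]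

theorem ContinuousLinearMap.ext_one_I {L M : ℂ →L[ℝ] F} (h1 : L 1 = M 1) (hI : L I = M I) :
    L = M :=
  ContinuousLinearMap.coe_injective <| basisOneI.ext fun i => by fin_cases i <;> simpa

theorem laplacian_eq_fderiv_fderiv_complexPlane {f : ℂ → F} (z : ℂ) :
    Δ f z = fderiv ℝ (fderiv ℝ f) z 1 1 + fderiv ℝ (fderiv ℝ f) z I I := by
  simp [laplacian_eq_iteratedFDeriv_complexPlane, iteratedFDeriv_two_apply]

theorem fderiv_apply_one_eq_zero_of_im_eq_zero {g : ℂ → F} (hg : Differentiable ℝ g)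
    (h₀ : ∀ z : ℂ, z.im = 0 → g z = 0) {z : ℂ} (hz : z.im = 0) : fderiv ℝ g z 1 = 0 := by
  obtain ⟨x, rfl⟩ : ∃ x : ℝ, (x : ℂ) = z := ⟨z.re, Complex.ext (by simp) (by simp [hz])⟩
  have hline : HasDerivAt (fun t : ℝ => g t) (fderiv ℝ g x 1) x := by
    simpa [Function.comp_def] using
      (hg x).hasFDerivAt.comp_hasDerivAt x (hasDerivAt_id x).ofReal_comp
  have hzero : (fun t : ℝ => g t) = fun _ => 0 := funext fun t => h₀ t (ofReal_im t)
  rw [hzero] at hline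
  exact hline.unique (hasDerivAt_const _ _)

theorem fderiv_fderiv_eq_zero_of_im_eq_zero {d : ℂ → F} (hd : ContDiff ℝ 2 d)
    (h₀ : ∀ z : ℂ, z.im = 0 → d z = 0) (hI : ∀ z : ℂ, z.im = 0 → fderiv ℝ d z I = 0)
    (hΔ : ∀ z : ℂ, z.im = 0 → Δ d z = 0) {z : ℂ} (hz : z.im = 0) :
    fderiv ℝ d z = 0 ∧ fderiv ℝ (fderiv ℝ d) z = 0 := by
  have hd' : ContDiff ℝ 1 (fderiv ℝ d) := hd.fderiv_right (by norm_num)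
  have h₁ : ∀ w : ℂ, w.im = 0 → fderiv ℝ d w = 0 := fun w hw =>
    ContinuousLinearMap.ext_one_I
      (by simpa using fderiv_apply_one_eq_zero_of_im_eq_zero (hd.differentiable two_ne_zero) h₀ hw)
      (by simpa using hI w hw)
  have h11 : fderiv ℝ (fderiv ℝ d) z 1 = 0 := by
    ext1 k
    have := fderiv_apply_one_eq_zero_of_im_eq_zero
      (g := fun w => fderiv ℝ d w k) (by fun_prop (disch := exact hd'.differentiable one_ne_zero))
      (fun w hw => by simp [h₁ w hw]) hz
    simpa [fderiv_clm_apply ((hd'.differentiable one_ne_zero) z) (differentiableAt_const k)]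
      using this
  have hsymm : fderiv ℝ (fderiv ℝ d) z I 1 = fderiv ℝ (fderiv ℝ d) z 1 I :=
    (hd.contDiffAt.isSymmSndFDerivAt (by simp [minSmoothness_of_isRCLikeNormedField])) I 1
  have hII : fderiv ℝ (fderiv ℝ d) z I I = 0 := by
    have := hΔ z hz
    rw [laplacian_eq_fderiv_fderiv_complexPlane, h11] at this
    simpa using this
  refine ⟨h₁ z hz, ContinuousLinearMap.ext_one_I (by simpa using h11) ?_⟩
  exact ContinuousLinearMap.ext_one_I (by simp [hsymm, h11]) (by simpa using hII)

theorem harmonicOnNhd_piecewise_of_im_eq_zero {u g : ℂ → F} (hu : ContDiff ℝ 2 u)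
    (hg : ContDiff ℝ 2 g) (huΔ : ∀ z : ℂ, 0 < z.im → Δ u z = 0)
    (hgΔ : ∀ z : ℂ, z.im < 0 → Δ g z = 0) (h₀ : ∀ z : ℂ, z.im = 0 → u z = g z)
    (hI : ∀ z : ℂ, z.im = 0 → fderiv ℝ u z I = fderiv ℝ g z I) :
    HarmonicOnNhd ({z : ℂ | z.im < 0}.piecewise g u) univ := by
  have hud := hu.differentiable two_ne_zero
  have hgd := hg.differentiable two_ne_zero
  have hu'd := (hu.fderiv_right (m := 1) (by norm_num)).differentiable one_ne_zero
  have hg'd := (hg.fderiv_right (m := 1) (by norm_num)).differentiable one_ne_zero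
  -- Matching to first order forces matching to second order: `∂²ₓ` and `∂ₓ∂ᵧ` are tangential
  -- derivatives of quantities vanishing on `ℝ`, and `∂²ᵧ = Δ - ∂²ₓ`.
  have hflat := fun (z : ℂ) (hz : z.im = 0) =>
    fderiv_fderiv_eq_zero_of_im_eq_zero (d := u - g) (hu.sub hg)
    (fun z hz => sub_eq_zero.2 (h₀ z hz))
    (fun z hz => by simp [fderiv_sub (hud z) (hgd z), hI z hz])
    (fun z hz => by
      rw [hu.contDiffAt.laplacian_sub hg.contDiffAt,
        hu.laplacian_eq_zero_of_mem_closure (s := {z | 0 < z.im}) huΔ (by simp [hz]),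
        hg.laplacian_eq_zero_of_mem_closure (s := {z | z.im < 0}) hgΔ (by simp [hz]), sub_zero])
    hz
  have hG : ContDiff ℝ 2 ({z : ℂ | z.im < 0}.piecewise g u) := by
    refine contDiff_two_piecewise hu hg ?_ ?_ ?_ <;> intro z hz <;>
      simp only [frontier_setOfPred_im_lt, mem_ofPred_eq] at hz
    · exact h₀ z hz
    · simpa [fderiv_sub (hud z) (hgd z), sub_eq_zero] using (hflat z hz).1
    · have h := (hflat z hz).2
      rwa [show fderiv ℝ (u - g) = fderiv ℝ u - fderiv ℝ g from
          funext fun w => fderiv_sub (hud w) (hgd w), fderiv_sub (hu'd z) (hg'd z),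
        sub_eq_zero] at h
  have hupper : ∀ z : ℂ, 0 < z.im → Δ ({z : ℂ | z.im < 0}.piecewise g u) z = 0 := fun z hz => by
    have h : {z : ℂ | z.im < 0}.piecewise g u =ᶠ[𝓝 z] u := by
      filter_upwards [(isOpen_lt continuous_const continuous_im).mem_nhds hz] with w hw
      exact piecewise_eq_of_notMem _ _ _ (not_lt.2 (le_of_lt hw))
    rw [(laplacian_congr_nhds h).eq_of_nhds, huΔ z hz]
  have hlower : ∀ z : ℂ, z.im < 0 → Δ ({z : ℂ | z.im < 0}.piecewise g u) z = 0 := fun z hz => by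
    have h : {z : ℂ | z.im < 0}.piecewise g u =ᶠ[𝓝 z] g := by
      filter_upwards [(isOpen_lt continuous_im continuous_const).mem_nhds hz] with w hw
      exact piecewise_eq_of_mem _ _ _ hw
    rw [(laplacian_congr_nhds h).eq_of_nhds, hgΔ z hz]
  have hΔ : ∀ z : ℂ, Δ ({z : ℂ | z.im < 0}.piecewise g u) z = 0 := fun z => by
    rcases lt_or_ge z.im 0 with hz | hz
    · exact hlower z hz
    · exact hG.laplacian_eq_zero_of_mem_closure (s := {z | 0 < z.im}) hupper (by simpa using hz)
  exact fun z _ => ⟨hG.contDiffAt, Eventually.of_forall hΔ⟩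

theorem apply_eq_apply_of_reflection {u : ℂ → F} (hu : ContDiff ℝ 2 u)
    (hΔ : ∀ z : ℂ, 0 < z.im → Δ u z = 0) {C : ℝ} (hC : ∀ z : ℂ, 0 ≤ z.im → ‖u z‖ ≤ C)
    {ε : ℝ} (hε : |ε| = 1) (h₀ : ∀ z : ℂ, z.im = 0 → u z = ε • u z)
    (hI : ∀ z : ℂ, z.im = 0 → fderiv ℝ u z I = -ε • fderiv ℝ u z I)
    {z w : ℂ} (hz : 0 ≤ z.im) (hw : 0 ≤ w.im) : u z = u w := by
  have hu' : ContDiff ℝ 2 (u ∘ conjLIE) := hu.comp conjLIE.contDiff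
  have hgΔ : ∀ z : ℂ, z.im < 0 → Δ (ε • (u ∘ conjLIE)) z = 0 := fun z hz => by
    rw [laplacian_smul ε hu'.contDiffAt, laplacian_comp_linearIsometryEquiv conjLIE hu,
      hΔ _ (by simpa using hz), smul_zero]
  have hgI : ∀ z : ℂ, z.im = 0 → fderiv ℝ (ε • (u ∘ conjLIE)) z I = -ε • fderiv ℝ u z I :=
    fun z hz => by
      rw [fderiv_const_smul (hu'.differentiable two_ne_zero z),
        ← LinearIsometryEquiv.coe_toContinuousLinearEquiv, ContinuousLinearEquiv.comp_right_fderiv]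
      simp [conj_eq_iff_im.2 hz]
  have hG := harmonicOnNhd_piecewise_of_im_eq_zero (g := ε • (u ∘ conjLIE)) hu (hu'.const_smul ε)
    hΔ hgΔ (fun z hz => by simpa [conj_eq_iff_im.2 hz] using h₀ z hz)
    (fun z hz => by rw [hgI z hz, ← hI z hz])
  have hbdd :
      Bornology.IsBounded (range ({z : ℂ | z.im < 0}.piecewise (ε • (u ∘ conjLIE)) u)) := by
    refine isBounded_iff_forall_norm_le.2 ⟨C, ?_⟩
    rintro _ ⟨z, rfl⟩
    by_cases hz : z.im < 0
    · simpa [piecewise, hz, norm_smul, hε] using hC (conj z) (by simp [hz.le])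
    · simpa [piecewise, hz] using hC z (not_lt.1 hz)
  simpa [piecewise_eq_of_notMem, not_lt.2 hz, not_lt.2 hw] using
    bounded_harmonic_on_complex_plane_is_constant _ hG hbdd z w

theorem apply_eq_apply_of_fderiv_I_eq_zero {u : ℂ → F} (hu : ContDiff ℝ 2 u)
    (hΔ : ∀ z : ℂ, 0 < z.im → Δ u z = 0) {C : ℝ} (hC : ∀ z : ℂ, 0 ≤ z.im → ‖u z‖ ≤ C)
    (hN : ∀ z : ℂ, z.im = 0 → fderiv ℝ u z I = 0) {z w : ℂ} (hz : 0 ≤ z.im) (hw : 0 ≤ w.im) :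
    u z = u w :=
  apply_eq_apply_of_reflection hu hΔ hC (ε := 1) (by simp) (fun _ _ => by simp)
    (fun z hz => by simp [hN z hz]) hz hw

theorem apply_eq_zero_of_eq_zero_of_im_eq_zero {u : ℂ → F} (hu : ContDiff ℝ 2 u)
    (hΔ : ∀ z : ℂ, 0 < z.im → Δ u z = 0) {C : ℝ} (hC : ∀ z : ℂ, 0 ≤ z.im → ‖u z‖ ≤ C)
    (hD : ∀ z : ℂ, z.im = 0 → u z = 0) {z : ℂ} (hz : 0 ≤ z.im) : u z = 0 := by
  rw [apply_eq_apply_of_reflection hu hΔ hC (ε := -1) (by simp) (fun z hz => by simp [hD z hz])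
    (fun _ _ => by simp) hz (w := 0) (by simp), hD 0 (by simp)]

end HalfPlane

theorem eq_of_inner_eq_of_inner_perp_eq {h a b : E2} (hh : h ≠ 0) (h₁ : ⟪a, h⟫ = ⟪b, h⟫)
    (h₂ : ⟪a, perp h⟫ = ⟪b, perp h⟫) : a = b := by
  have hn : h 0 * h 0 + h 1 * h 1 ≠ 0 := by
    have := (inner_self_ne_zero (𝕜 := ℝ)).2 hh
    simpa only [PiLp.inner_apply, Fin.sum_univ_two, RCLike.inner_apply, conj_trivial] using this
  simp only [PiLp.inner_apply, Fin.sum_univ_two, perp, RCLike.inner_apply, conj_trivial] at h₁ h₂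
  simp only [WithLp.equiv_symm_apply, Fin.isValue, Matrix.cons_val_zero, Matrix.cons_val_one] at h₂
  have h0 : a 0 = b 0 := mul_right_cancel₀ hn (by linear_combination h 0 * h₁ - h 1 * h₂)
  have h1 : a 1 = b 1 := mul_right_cancel₀ hn (by linear_combination h 1 * h₁ + h 0 * h₂)
  ext i
  fin_cases i
  exacts [h0, h1]

theorem laplacian_inner_comp_repr {v : E2 → E2} (hv : ContDiff ℝ 2 v) (e : E2) (z : ℂ) :
    Δ (fun z : ℂ => ⟪v (orthonormalBasisOneI.repr z), e⟫) z
      = ⟪vlap v (orthonormalBasisOneI.repr z), e⟫ := by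
  have hφ : (fun y => ⟪v y, e⟫) = innerSL ℝ e ∘ v := funext fun y => real_inner_comm _ _
  change Δ ((fun y => ⟪v y, e⟫) ∘ orthonormalBasisOneI.repr) z = _
  rw [laplacian_comp_linearIsometryEquiv _ (hv.inner ℝ contDiff_const), hφ,
    hv.contDiffAt.laplacian_CLM_comp_left, vlap_eq_laplacian hv]
  simp [real_inner_comm]

/-- a bounded harmonic map `v` on the upper half-plane `{x₂ > 0}` with
`⟨v, h^⊥⟩ = 0` and `∂ₙ⟨v, h⟩ = 0` on the boundary `{x₂ = 0}` is constant. -/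
theorem stmt2 (v : E2 → E2) (h : E2) (hh : ‖h‖ = 1)
    (hsm : ContDiff ℝ 2 v)
    (hharm : ∀ x : E2, 0 < x 1 → vlap v x = 0)
    (C : ℝ) (hbdd : ∀ x : E2, 0 ≤ x 1 → ‖v x‖ ≤ C)
    (hbc1 : ∀ x : E2, x 1 = 0 → ⟪v x, perp h⟫ = 0)
    (hbc2 : ∀ x : E2, x 1 = 0 →
      fderiv ℝ (fun y => ⟪v y, h⟫) x (EuclideanSpace.single 1 1) = 0) :
    ∀ x y : E2, 0 ≤ x 1 → 0 ≤ y 1 → v x = v y := by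
  set ι := orthonormalBasisOneI.repr
  have hu (e : E2) : ContDiff ℝ 2 fun z => ⟪v (ι z), e⟫ :=
    (hsm.inner ℝ contDiff_const).comp ι.contDiff
  have hΔ (e : E2) (z : ℂ) (hz : 0 < z.im) : Δ (fun z => ⟪v (ι z), e⟫) z = 0 := by
    rw [laplacian_inner_comp_repr hsm, hharm _ (by simpa [ι] using hz), inner_zero_left]
  have hC (e : E2) (z : ℂ) (hz : 0 ≤ z.im) : ‖⟪v (ι z), e⟫‖ ≤ C * ‖e‖ :=
    (norm_inner_le_norm _ _).trans
      (mul_le_mul_of_nonneg_right (hbdd _ (by simpa [ι] using hz)) (norm_nonneg e))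
  have hN (z : ℂ) (hz : z.im = 0) : fderiv ℝ (fun z => ⟪v (ι z), h⟫) z I = 0 := by
    have hιI : ι I = EuclideanSpace.single 1 1 := by simpa using orthonormalBasisOneI.repr_self 1
    change fderiv ℝ ((fun y => ⟪v y, h⟫) ∘ ι.toContinuousLinearEquiv) z I = 0
    rw [ContinuousLinearEquiv.comp_right_fderiv]
    simpa [hιI] using hbc2 (ι z) (by simpa [ι] using hz)
  have hD (z : ℂ) (hz : z.im = 0) : ⟪v (ι z), perp h⟫ = 0 := hbc1 _ (by simpa [ι] using hz)
  intro x y hx hy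
  have hx' : 0 ≤ (ι.symm x).im := by simpa [ι] using hx
  have hy' : 0 ≤ (ι.symm y).im := by simpa [ι] using hy
  rw [← ι.apply_symm_apply x, ← ι.apply_symm_apply y]
  refine eq_of_inner_eq_of_inner_perp_eq (norm_ne_zero_iff.1 (hh ▸ one_ne_zero)) ?_ ?_
  · exact apply_eq_apply_of_fderiv_I_eq_zero (hu h) (hΔ h) (hC h) hN hx' hy'
  · rw [apply_eq_zero_of_eq_zero_of_im_eq_zero (hu _) (hΔ _) (hC _) hD hx',
      apply_eq_zero_of_eq_zero_of_im_eq_zero (hu _) (hΔ _) (hC _) hD hy']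
end
end

section
/- Let u, g : Γ₀ → ℝ² with |g| = 1, |u| ≥ 1/2, and write u/|u| = e^{iψ}, g = e^{iγ} for continuous liftings ψ, γ on a boundary arc Γ₀. Suppose ψ − γ = Dθ + γ₀ − γ + φ (some representation) and that |φ| ≤ π/4 on Γ₀, that |sin(Dθ+γ₀−γ)| ≤ Cρ and |cos(Dθ+γ₀−γ)| ≥ 1/2 on Γ₀. Then |⟨u, g^⊥⟩| ≥ (1/8)|φ| − (C/2)ρ on Γ₀. -/
/-!
Write `a = Dθ + γ₀ - γ`. Then `⟨u, g^⊥⟩ = |u| sin (a + φ)`, and the addition formula gives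
`|sin (a + φ)| ≥ |cos a| |sin φ| - |sin a| ≥ |φ|/4 - Cρ`, using Jordan's inequality
`|sin φ| ≥ (2/π)|φ| ≥ |φ|/2`; multiplying by `|u| ≥ 1/2` finishes.
-/

open Set Real

noncomputable section

/-- The real inner product of two complex numbers viewed as vectors of ℝ². -/
def rinner (a b : ℂ) : ℝ := a.re * b.re + a.im * b.im

lemma rinner_ofReal_mul_exp_I_mul_exp (r ψ γ : ℝ) :
    rinner ((r : ℂ) * Complex.exp ((ψ : ℂ) * Complex.I))
      (Complex.I * Complex.exp ((γ : ℂ) * Complex.I)) = r * sin (ψ - γ) := by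
  simp only [rinner, Complex.mul_re, Complex.mul_im, Complex.ofReal_re, Complex.ofReal_im,
    Complex.I_re, Complex.I_im, Complex.exp_ofReal_mul_I_re, Complex.exp_ofReal_mul_I_im,
    Real.sin_sub]
  ring

lemma abs_cos_mul_abs_sin_sub_abs_sin_le_abs_sin_add (a φ : ℝ) :
    |cos a| * |sin φ| - |sin a| ≤ |sin (a + φ)| := by
  have hcosφ : |sin a * cos φ| ≤ |sin a| := by
    rw [abs_mul]
    exact mul_le_of_le_one_right (abs_nonneg _) (abs_cos_le_one φ)
  have htri := abs_sub_abs_le_abs_sub (cos a * sin φ) (-(sin a * cos φ))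
  rw [abs_neg, sub_neg_eq_add, abs_mul] at htri
  rw [sin_add, add_comm (sin a * cos φ)]
  linarith

lemma abs_div_two_le_abs_sin {x : ℝ} (hx : |x| ≤ π / 2) : |x| / 2 ≤ |sin x| := by
  have h2π : 1 / 2 ≤ 2 / π := by
    rw [div_le_div_iff₀ two_pos pi_pos]; linarith [pi_le_four]
  nlinarith [mul_abs_le_abs_sin hx, abs_nonneg x]

theorem stmt16_general {α : Type*} (Γ₀ : Set α)
    (u g : α → ℂ) (ψ γ θ φ ρ : α → ℝ) (D : ℤ) (γ₀ C : ℝ)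
    (hu2 : ∀ x ∈ Γ₀, (1 : ℝ) / 2 ≤ ‖u x‖)
    (hu : ∀ x ∈ Γ₀, u x = ((‖u x‖ : ℝ) : ℂ) * Complex.exp (((ψ x : ℝ) : ℂ) * Complex.I))
    (hg : ∀ x ∈ Γ₀, g x = Complex.exp (((γ x : ℝ) : ℂ) * Complex.I))
    (hrep : ∀ x ∈ Γ₀, ψ x = (D : ℝ) * θ x + γ₀ + φ x)
    (hφ : ∀ x ∈ Γ₀, |φ x| ≤ π / 4)
    (hsin : ∀ x ∈ Γ₀, |Real.sin ((D : ℝ) * θ x + γ₀ - γ x)| ≤ C * ρ x)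
    (hcos : ∀ x ∈ Γ₀, (1 : ℝ) / 2 ≤ |Real.cos ((D : ℝ) * θ x + γ₀ - γ x)|) :
    ∀ x ∈ Γ₀, (1 / 8) * |φ x| - (C / 2) * ρ x ≤ |rinner (u x) (Complex.I * g x)| := by
  intro x hx
  set a := (D : ℝ) * θ x + γ₀ - γ x
  have hangle : ψ x - γ x = a + φ x := by rw [hrep x hx]; ring
  have hinner : rinner (u x) (Complex.I * g x) = ‖u x‖ * sin (a + φ x) := by
    rw [hg x hx]
    nth_rw 1 [hu x hx]
    rw [rinner_ofReal_mul_exp_I_mul_exp, hangle]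
  have hsinφ : |φ x| / 2 ≤ |sin (φ x)| :=
    abs_div_two_le_abs_sin ((hφ x hx).trans (by linarith [pi_pos]))
  have hlower : |φ x| / 4 - C * ρ x ≤ |sin (a + φ x)| := by
    nlinarith [abs_cos_mul_abs_sin_sub_abs_sin_le_abs_sin_add a (φ x), hsin x hx, hcos x hx,
      abs_nonneg (sin (φ x))]
  rw [hinner, abs_mul, abs_norm]
  nlinarith [hu2 x hx, abs_nonneg (sin (a + φ x))]

/-- core estimate of Proposition 5.1.  With `u = |u|e^{iψ}`,
`g = e^{iγ}`, `ψ = Dθ + γ₀ + φ`, `|φ| ≤ π/4`, `|sin(Dθ+γ₀−γ)| ≤ Cρ` and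
`|cos(Dθ+γ₀−γ)| ≥ 1/2`, one has `|⟨u, g^⊥⟩| ≥ (1/8)|φ| − (C/2)ρ` on `Γ₀`. -/
theorem stmt16 {α : Type*} (Γ₀ : Set α)
    (u g : α → ℂ) (ψ γ θ φ ρ : α → ℝ) (D : ℤ) (γ₀ C : ℝ) (hC : 0 ≤ C)
    (hu2 : ∀ x ∈ Γ₀, (1 : ℝ) / 2 ≤ ‖u x‖)
    (hu : ∀ x ∈ Γ₀, u x = ((‖u x‖ : ℝ) : ℂ) * Complex.exp (((ψ x : ℝ) : ℂ) * Complex.I))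
    (hg : ∀ x ∈ Γ₀, g x = Complex.exp (((γ x : ℝ) : ℂ) * Complex.I))
    (hrep : ∀ x ∈ Γ₀, ψ x = (D : ℝ) * θ x + γ₀ + φ x)
    (hφ : ∀ x ∈ Γ₀, |φ x| ≤ π / 4)
    (hρ : ∀ x ∈ Γ₀, 0 ≤ ρ x)
    (hsin : ∀ x ∈ Γ₀, |Real.sin ((D : ℝ) * θ x + γ₀ - γ x)| ≤ C * ρ x)
    (hcos : ∀ x ∈ Γ₀, (1 : ℝ) / 2 ≤ |Real.cos ((D : ℝ) * θ x + γ₀ - γ x)|) :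
    ∀ x ∈ Γ₀, (1 / 8) * |φ x| - (C / 2) * ρ x ≤ |rinner (u x) (Complex.I * g x)| :=
  stmt16_general Γ₀ u g ψ γ θ φ ρ D γ₀ C hu2 hu hg hrep hφ hsin hcos
end
end
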